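/- arXiv:0709.1433 — 10 statements merged into one kernel-verified Lean document; each statement's English description precedes it below -/
import Mathlib

section
/- Let F be a finite field. Then there exists a nonzero element p in F such that the polynomial X² − p·(X + 1) has no root in F. -/
/-- In every finite field there is a nonzero `p` such that `X² - p(X+1)` has no root. -/
theorem exists_irreducible_quadratic {F : Type*} [Field F] [Fintype F] :
    ∃ p : F, p ≠ 0 ∧ ∀ x : F, x ^ 2 - p * (x + 1) ≠ 0 := by
  classical
  set T : Finset F := (Finset.univ.erase (-1)).erase 0 with hT
  set Img : Finset F := T.image (fun x => x ^ 2 * (x + 1)⁻¹) with hImg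
  have hneg : (-1 : F) ∈ Finset.univ.erase (0 : F) := by
    simp [neg_ne_zero]
  have hTcard : T.card < (Finset.univ.erase (0 : F)).card := by
    have h1 : T.card < (Finset.univ.erase (-1 : F)).card :=
      Finset.card_erase_lt_of_mem (by simp)
    have h2 : (Finset.univ.erase (-1 : F)).card = (Finset.univ.erase (0 : F)).card := by
      rw [Finset.card_erase_of_mem (by simp), Finset.card_erase_of_mem (by simp)]
    omega
  have hIcard : Img.card < (Finset.univ.erase (0 : F)).card :=
    lt_of_le_of_lt (Finset.card_image_le) hTcard
  have : ∃ p ∈ Finset.univ.erase (0 : F), p ∉ Img := by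
    by_contra h
    push_neg at h
    have := Finset.card_le_card (fun p hp => h p hp)
    omega
  obtain ⟨p, hp, hpI⟩ := this
  have hp0 : p ≠ 0 := Finset.ne_of_mem_erase hp
  refine ⟨p, hp0, fun x hx => ?_⟩
  have hroot : x ^ 2 = p * (x + 1) := sub_eq_zero.mp hx
  have hx1 : x + 1 ≠ 0 := by
    intro h
    have hx2 : x ^ 2 = 0 := by rw [hroot, h, mul_zero]
    have hx0' : x = 0 := by simpa using pow_eq_zero_iff (n := 2) (by norm_num) |>.mp hx2
    rw [hx0'] at h
    simp at h
  have hx0 : x ≠ 0 := by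
    intro h
    rw [h] at hroot
    simp at hroot
    exact hp0 hroot.symm
  have hxm : x ≠ -1 := fun h => hx1 (by rw [h]; ring)
  have hxT : x ∈ T := by simp [hT, hx0, hxm]
  have : p = x ^ 2 * (x + 1)⁻¹ := by
    field_simp
    linear_combination -hroot
  exact hpI (by rw [hImg]; exact Finset.mem_image.mpr ⟨x, hxT, this.symm⟩)
end

section
/- With F a finite field, F² the quadratic extension by a root α of X² − p(X+1) (p ∈ F* making it irreducible), γ = 1 − p⁻¹α, τ = p⁻¹α: the map σ̃: F² → F² defined by σ̃(a·γ + b·τ) = b·γ + a·τ (for a, b ∈ F) is a field automorphism of F², and it is an involution, hence a sesqui-morphism. -/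
/-! σ̃ is the Frobenius `x ↦ x ^ #F` of `K/F`. It generates `Gal(K/F)`, which has order `[K : F] = 2`,
so it is an involution whose fixed field is `F`. Since `X² - p(X + 1)` has no root in `F`, it moves
`α` to the other root `p - α`, and this swaps `γ = 1 - α/p` and `τ = α/p`. -/

theorem eq_sub_of_sq_eq_mul_add_one {K : Type*} [CommRing K] [IsDomain K] {c α β : K}
    (hα : α ^ 2 = c * (α + 1)) (hβ : β ^ 2 = c * (β + 1)) (hne : β ≠ α) : β = c - α := by
  have : (β - α) * (β + α - c) = 0 := by linear_combination hβ - hα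
  linear_combination (mul_eq_zero.mp this).resolve_left (sub_ne_zero.mpr hne)

theorem map_inv_mul_of_map_eq_sub {K : Type*} [Field K] (σ : K →+* K) {c α : K} (hc : c ≠ 0)
    (hσc : σ c = c) (hσα : σ α = c - α) : σ (c⁻¹ * α) = 1 - c⁻¹ * α := by
  rw [map_mul, map_inv₀, hσc, hσα]
  field_simp

namespace FiniteField

variable (F K : Type*) [Field F] [Fintype F] [Field K] [Algebra F K] [Finite K]

theorem frobeniusAlgEquivOfAlgebraic_apply_eq_self_iff {x : K} :
    frobeniusAlgEquivOfAlgebraic F K x = x ↔ x ∈ Set.range (algebraMap F K) := by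
  have : FiniteDimensional F K := Module.Finite.of_finite
  rw [IsGalois.mem_range_algebraMap_iff_fixed]
  refine ⟨fun hx f => ?_, fun h => h _⟩
  obtain ⟨n, rfl⟩ := (bijective_frobeniusAlgEquivOfAlgebraic_pow F K).2 f
  rw [AlgEquiv.coe_pow]
  exact Function.iterate_fixed hx n

theorem frobeniusAlgEquivOfAlgebraic_apply_apply (h : Module.finrank F K = 2) (x : K) :
    frobeniusAlgEquivOfAlgebraic F K (frobeniusAlgEquivOfAlgebraic F K x) = x := by
  have := pow_orderOf_eq_one (frobeniusAlgEquivOfAlgebraic F K)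
  rw [orderOf_frobeniusAlgEquivOfAlgebraic, h, pow_two] at this
  exact DFunLike.congr_fun this x

end FiniteField

open FiniteField in
/-- The map `σ̃ (aγ + bτ) = bγ + aτ` is a field automorphism of the quadratic
extension `K`, is an involution, and hence a sesqui-morphism. -/
theorem sigma_tilde_automorphism {F K : Type*} [Field F] [Fintype F] [Field K] [Algebra F K]
    (hdim : Module.finrank F K = 2)
    (p : F) (hp : p ≠ 0) (hroot : ∀ x : F, x ^ 2 - p * (x + 1) ≠ 0)
    (α : K) (hα : α ^ 2 = algebraMap F K p * (α + 1))
    (γ τ : K)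
    (hγ : γ = 1 - (algebraMap F K p)⁻¹ * α)
    (hτ : τ = (algebraMap F K p)⁻¹ * α) :
    ∃ e : K ≃+* K,
      (∀ a b : F, e (algebraMap F K a * γ + algebraMap F K b * τ)
          = algebraMap F K b * γ + algebraMap F K a * τ) ∧
      (∀ x : K, e (e x) = x) ∧
      (∃ e' : K ≃+* K, ∀ x : K, e' x = e x / e 1) := by
  have : FiniteDimensional F K := .of_finrank_eq_succ hdim
  have : Finite K := Module.finite_of_finite F
  set σ := frobeniusAlgEquivOfAlgebraic F K
  have hσα : σ α = algebraMap F K p - α := by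
    refine eq_sub_of_sq_eq_mul_add_one hα (by rw [← map_pow, hα]; simp) fun hfix => ?_
    obtain ⟨a, rfl⟩ := (frobeniusAlgEquivOfAlgebraic_apply_eq_self_iff F K).mp hfix
    exact hroot a ((algebraMap F K).injective (by simpa [sub_eq_zero] using hα))
  have hστ : σ τ = γ := by
    rw [hτ, hγ]
    exact map_inv_mul_of_map_eq_sub σ.toRingHom (by simpa using hp) (σ.commutes p) hσα
  have hσγ : σ γ = τ := by
    rw [← frobeniusAlgEquivOfAlgebraic_apply_apply F K hdim τ, hστ]
  refine ⟨σ.toRingEquiv, fun a b => ?_, frobeniusAlgEquivOfAlgebraic_apply_apply F K hdim,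
    σ.toRingEquiv, fun x => by simp⟩
  simp [hσγ, hστ, add_comm]
end

section
/- Let F be a field, V a finite set, and M: V × V → F any matrix. For all subsets X₁, Y₁ of the row index set and X₂, Y₂ of the column index set, rk(M[X₁,X₂]) + rk(M[Y₁,Y₂]) ≥ rk(M[X₁∪Y₁, X₂∩Y₂]) + rk(M[X₁∩Y₁, X₂∪Y₂]). -/
/-!
Let `K_X ≤ F^R` be the subspace of vectors vanishing on the rows `X`, and `S_Y` the span of the
columns `Y` of `M`. Restricting to the rows `X` has kernel `K_X` and maps `S_Y` onto the column
space of `M[X,Y]`, so rank–nullity gives `rk M[X,Y] = dim (S_Y ⊔ K_X) - dim K_X`.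
Since `K_{X₁ ∪ Y₁} = K_{X₁} ⊓ K_{Y₁}` and `K_{X₁ ∩ Y₁} = K_{X₁} ⊔ K_{Y₁}`, the subspace attached to
`(X₁ ∪ Y₁, X₂ ∩ Y₂)` lies in the meet, and that attached to `(X₁ ∩ Y₁, X₂ ∪ Y₂)` in the join,
of the subspaces attached to `(X₁, X₂)` and `(Y₁, Y₂)`; the modular law for dimensions then
gives the inequality, the `dim K` terms cancelling by the same law.
-/

/-- Rank (over `F`) of the submatrix of `M` with rows indexed by `X` and columns by `Y`. -/
noncomputable def rkSub {V W F : Type*} [Fintype V] [Fintype W] [Field F]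
    (M : Matrix V W F) (X : Finset V) (Y : Finset W) : ℕ :=
  (M.submatrix (fun i : X => (i : V)) (fun j : Y => (j : W))).rank

open Module Submodule

theorem Submodule.finrank_map_add_finrank_ker {K V W : Type*} [DivisionRing K] [AddCommGroup V]
    [Module K V] [FiniteDimensional K V] [AddCommGroup W] [Module K W]
    (f : V →ₗ[K] W) (S : Submodule K V) :
    finrank K (S.map f) + finrank K (LinearMap.ker f) = finrank K ↥(S ⊔ LinearMap.ker f) := by
  have rank_nullity := (f.domRestrict S).finrank_range_add_finrank_ker
  rw [LinearMap.range_domRestrict, LinearMap.ker_domRestrict,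
    (equivMapOfInjective _ S.injective_subtype _).finrank_eq, map_comap_subtype] at rank_nullity
  have modular := finrank_sup_add_finrank_inf_eq S (LinearMap.ker f)
  omega

section

variable {F R C : Type*} [Field F]

variable (F) in
noncomputable def vanishingOn (X : Finset R) : Submodule F (R → F) :=
  LinearMap.ker (LinearMap.funLeft F F ((↑) : X → R))

theorem mem_vanishingOn {X : Finset R} {v : R → F} :
    v ∈ vanishingOn F X ↔ ∀ i ∈ X, v i = 0 := by
  simp [vanishingOn, funext_iff]

theorem vanishingOn_anti {X Y : Finset R} (h : X ⊆ Y) : vanishingOn F Y ≤ vanishingOn F X :=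
  fun _ hv ↦ mem_vanishingOn.mpr fun i hi ↦ mem_vanishingOn.mp hv i (h hi)

noncomputable def columnSpan (M : Matrix R C F) (Y : Finset C) : Submodule F (R → F) :=
  span F (M.col '' Y)

theorem columnSpan_mono (M : Matrix R C F) {Y Y' : Finset C} (h : Y ⊆ Y') :
    columnSpan M Y ≤ columnSpan M Y' :=
  span_mono (Set.image_mono (Finset.coe_subset.mpr h))

theorem columnSpan_union [DecidableEq C] (M : Matrix R C F) (Y Y' : Finset C) :
    columnSpan M (Y ∪ Y') = columnSpan M Y ⊔ columnSpan M Y' := by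
  rw [columnSpan, Finset.coe_union, Set.image_union, span_union, columnSpan, columnSpan]

/-- The preimage of the column space of `M[X,Y]` under restriction to the rows `X`. -/
noncomputable def liftedColumnSpan (M : Matrix R C F) (X : Finset R) (Y : Finset C) :
    Submodule F (R → F) :=
  columnSpan M Y ⊔ vanishingOn F X

variable [Fintype R] [Fintype C] in
theorem rkSub_eq_finrank_map_columnSpan (M : Matrix R C F) (X : Finset R) (Y : Finset C) :
    rkSub M X Y = finrank F ((columnSpan M Y).map (LinearMap.funLeft F F ((↑) : X → R))) := by
  rw [rkSub, Matrix.rank_eq_finrank_span_cols, columnSpan, map_span, ← Set.image_comp,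
    Set.image_eq_range]
  rfl

variable [Fintype R] [Fintype C] in
theorem rkSub_add_finrank_vanishingOn (M : Matrix R C F) (X : Finset R) (Y : Finset C) :
    rkSub M X Y + finrank F (vanishingOn F X) = finrank F (liftedColumnSpan M X Y) := by
  rw [rkSub_eq_finrank_map_columnSpan]
  exact finrank_map_add_finrank_ker _ _

variable [DecidableEq R]

theorem vanishingOn_union (X Y : Finset R) :
    vanishingOn F (X ∪ Y) = vanishingOn F X ⊓ vanishingOn F Y := by
  ext v
  simp only [mem_inf, mem_vanishingOn, Finset.mem_union, or_imp, forall_and]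

theorem vanishingOn_inter (X Y : Finset R) :
    vanishingOn F (X ∩ Y) = vanishingOn F X ⊔ vanishingOn F Y := by
  refine le_antisymm (fun v hv ↦ ?_) (sup_le (vanishingOn_anti Finset.inter_subset_left)
    (vanishingOn_anti Finset.inter_subset_right))
  rw [mem_vanishingOn] at hv
  have hsplit : X.piecewise (0 : R → F) v + X.piecewise v 0 = v := by
    ext i
    by_cases hX : i ∈ X <;> simp [hX]
  refine hsplit ▸ add_mem_sup (mem_vanishingOn.mpr fun i hi ↦ by simp [hi])
    (mem_vanishingOn.mpr fun i hi ↦ ?_)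
  by_cases hX : i ∈ X
  · simpa [hX] using hv i (Finset.mem_inter.mpr ⟨hX, hi⟩)
  · simp [hX]

variable [DecidableEq C] (M : Matrix R C F) (X₁ Y₁ : Finset R) (X₂ Y₂ : Finset C)

theorem liftedColumnSpan_union_inter_le :
    liftedColumnSpan M (X₁ ∪ Y₁) (X₂ ∩ Y₂) ≤
      liftedColumnSpan M X₁ X₂ ⊓ liftedColumnSpan M Y₁ Y₂ := by
  rw [liftedColumnSpan, vanishingOn_union]
  refine sup_le (le_inf ?_ ?_) (inf_le_inf le_sup_right le_sup_right)
  · exact (columnSpan_mono M Finset.inter_subset_left).trans le_sup_left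
  · exact (columnSpan_mono M Finset.inter_subset_right).trans le_sup_left

theorem liftedColumnSpan_inter_union_le :
    liftedColumnSpan M (X₁ ∩ Y₁) (X₂ ∪ Y₂) ≤
      liftedColumnSpan M X₁ X₂ ⊔ liftedColumnSpan M Y₁ Y₂ := by
  rw [liftedColumnSpan, liftedColumnSpan, liftedColumnSpan, columnSpan_union, vanishingOn_inter,
    sup_sup_sup_comm]

end

/-- Submodular inequality for the matrix rank function. -/
theorem rank_submodular {F R C : Type*} [Field F] [Fintype R] [Fintype C]
    [DecidableEq R] [DecidableEq C]
    (M : Matrix R C F) (X₁ Y₁ : Finset R) (X₂ Y₂ : Finset C) :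
    rkSub M (X₁ ∪ Y₁) (X₂ ∩ Y₂) + rkSub M (X₁ ∩ Y₁) (X₂ ∪ Y₂)
      ≤ rkSub M X₁ X₂ + rkSub M Y₁ Y₂ := by
  have hU := finrank_sup_add_finrank_inf_eq (liftedColumnSpan M X₁ X₂) (liftedColumnSpan M Y₁ Y₂)
  have hK := finrank_sup_add_finrank_inf_eq (vanishingOn F X₁) (vanishingOn F Y₁)
  rw [← vanishingOn_inter, ← vanishingOn_union] at hK
  have h₁ := finrank_mono (liftedColumnSpan_union_inter_le M X₁ Y₁ X₂ Y₂)
  have h₂ := finrank_mono (liftedColumnSpan_inter_union_le M X₁ Y₁ X₂ Y₂)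
  have r₁ := rkSub_add_finrank_vanishingOn M (X₁ ∪ Y₁) (X₂ ∩ Y₂)
  have r₂ := rkSub_add_finrank_vanishingOn M (X₁ ∩ Y₁) (X₂ ∪ Y₂)
  have rX := rkSub_add_finrank_vanishingOn M X₁ X₂
  have rY := rkSub_add_finrank_vanishingOn M Y₁ Y₂
  omega
end

section
/- Let F be a field, σ a sesqui-morphism on F, and λ ∈ F* a σ-compatible element, i.e., σ(λ) = λ·σ(1)². Let G be a σ-symmetric F*-graph with adjacency matrix M and x a vertex. Define the λ-local complementation at x by M'(z,t) = M(z,t) + λ·M(z,x)·M(x,t) if x ∉ {z,t}, and M'(z,t) = M(z,t) otherwise. Then M' is again σ-symmetric: M'(t,z) = σ(M'(z,t)) for all z ≠ t. -/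
/-- λ-local complementation preserves σ-symmetry, for σ-compatible λ. -/
theorem localComp_sigmaSymmetric {F V : Type*} [Field F] [Fintype V] [DecidableEq V]
    (σ : F → F)
    (hinv : ∀ a : F, σ (σ a) = a)
    (hauto : ∃ e : F ≃+* F, ∀ x : F, e x = σ x / σ 1)
    (l : F) (hl : l ≠ 0) (hcompat : σ l = l * σ 1 ^ 2)
    (M : Matrix V V F) (hsym : ∀ x y : V, M x y = σ (M y x))
    (hdiag : ∀ x : V, M x x = 0)
    (x : V) (M' : Matrix V V F)
    (hM' : ∀ z t : V,
      M' z t = if z ≠ x ∧ t ≠ x then M z t + l * M z x * M x t else M z t) :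
    ∀ z t : V, z ≠ t → M' t z = σ (M' z t) := by
  obtain ⟨e, he⟩ := hauto
  have hσ1 : σ 1 ≠ 0 := by
    intro h
    have h1 := he 1
    rw [h, div_zero] at h1
    simpa [h1] using e.map_one
  have hσ : ∀ a, σ a = e a * σ 1 := by
    intro a
    have := he a
    field_simp at this
    exact this.symm
  have hadd : ∀ a b, σ (a + b) = σ a + σ b := by
    intro a b; rw [hσ (a+b), hσ a, hσ b, map_add]; ring
  have hmul : ∀ a b, σ (a * b) * σ 1 = σ a * σ b := by
    intro a b; rw [hσ (a*b), hσ a, hσ b, map_mul]; ring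
  have hmul3 : ∀ a b c, σ (a * b * c) * (σ 1 * σ 1) = σ a * σ b * σ c := by
    intro a b c
    calc σ (a * b * c) * (σ 1 * σ 1) = σ (a * b * c) * σ 1 * σ 1 := by ring
      _ = σ (a * b) * σ c * σ 1 := by rw [hmul]
      _ = (σ (a * b) * σ 1) * σ c := by ring
      _ = σ a * σ b * σ c := by rw [hmul]
  have hswap : ∀ z t : V, σ (M z t) = M t z := by
    intro z t; rw [hsym z t, hinv]
  have hterm : ∀ z t : V, σ (l * M z x * M x t) = l * M t x * M x z := by
    intro z t
    have key : σ (l * M z x * M x t) * (σ 1 * σ 1)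
        = (l * M t x * M x z) * (σ 1 * σ 1) := by
      rw [hmul3, hcompat, hswap, hswap]
      ring
    exact mul_right_cancel₀ (mul_ne_zero hσ1 hσ1) key
  intro z t hzt
  rw [hM' z t, hM' t z]
  by_cases h1 : z ≠ x ∧ t ≠ x
  · rw [if_pos h1, if_pos ⟨h1.2, h1.1⟩, hadd, hswap, hterm]
  · have h2 : ¬ (t ≠ x ∧ z ≠ x) := by tauto
    rw [if_neg h1, if_neg h2, hswap]
end

section
/- Let F be a field, G a σ-symmetric F*-graph with adjacency matrix M on vertex set V, x a vertex, λ ∈ F*, and let M' be the adjacency matrix of the λ-local complementation of G at x. Then for every subset X ⊆ V, rk(M'[X, V\X]) = rk(M[X, V\X]). -/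
open Matrix

/-- Adding a multiple of row `x` to the other rows preserves rank. -/
lemma rank_rowOp {n m F : Type*} [Fintype n] [Fintype m] [DecidableEq n] [Field F]
    (A : Matrix n m F) (x : n) (c : n → F) (hc : c x = 0) :
    (Matrix.of fun i j => A i j + c i * A x j).rank = A.rank := by
  set N : Matrix n n F := Matrix.of (fun i j => if j = x then c i else 0) with hN
  have hNN : N * N = 0 := by
    ext i j
    simp only [Matrix.mul_apply, hN, Matrix.of_apply, Matrix.zero_apply]
    rw [Finset.sum_eq_single x]
    · simp [hc]
    · intro b _ hb; simp [hb]
    · simp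
  have h1 : (1 + N) * (1 - N) = 1 := by
    rw [add_mul, mul_sub, mul_sub, hNN]
    simp
  have h2 : (1 - N) * (1 + N) = 1 := mul_eq_one_comm.mp h1
  have hE : (Matrix.of fun i j => A i j + c i * A x j) = (1 + N) * A := by
    ext i j
    simp only [Matrix.add_mul, Matrix.one_mul, Matrix.add_apply, Matrix.of_apply]
    congr 1
    simp only [Matrix.mul_apply, hN, Matrix.of_apply]
    rw [Finset.sum_eq_single x]
    · simp
    · intro b _ hb; simp [hb]
    · simp
  have hu : IsUnit ((1 + N) : Matrix n n F).det :=
    (Matrix.isUnit_iff_isUnit_det _).mp ⟨⟨1 + N, 1 - N, h1, h2⟩, rfl⟩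
  rw [hE, Matrix.rank_mul_eq_right_of_isUnit_det _ _ hu]

/-- λ-local complementation does not change the cut-rank function. -/
theorem localComp_cutrank {F V : Type*} [Field F] [Fintype V] [DecidableEq V]
    (σ : F → F)
    (hinv : ∀ a : F, σ (σ a) = a)
    (hauto : ∃ e : F ≃+* F, ∀ x : F, e x = σ x / σ 1)
    (M : Matrix V V F) (hsym : ∀ x y : V, M x y = σ (M y x))
    (hdiag : ∀ x : V, M x x = 0)
    (x : V) (l : F) (hl : l ≠ 0)
    (M' : Matrix V V F)
    (hM' : ∀ z t : V,
      M' z t = if z ≠ x ∧ t ≠ x then M z t + l * M z x * M x t else M z t) :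
    ∀ X : Finset V, rkSub M' X Xᶜ = rkSub M X Xᶜ := by
  intro X
  unfold rkSub
  by_cases hx : x ∈ X
  · -- row operation
    set x' : X := ⟨x, hx⟩
    have key : (M'.submatrix (fun i : X => (i : V)) (fun j : (Xᶜ : Finset V) => (j : V)))
        = Matrix.of (fun i j =>
            (M.submatrix (fun i : X => (i : V)) (fun j : (Xᶜ : Finset V) => (j : V))) i j
            + (if (i : V) = x then 0 else l * M i x)
              * (M.submatrix (fun i : X => (i : V)) (fun j : (Xᶜ : Finset V) => (j : V))) x' j) := by
      ext i j
      have hj : (j : V) ≠ x := by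
        intro h; exact (Finset.mem_compl.mp j.2) (h ▸ hx)
      simp only [Matrix.submatrix_apply, Matrix.of_apply, hM']
      by_cases hi : (i : V) = x
      · simp [hi, hj]
      · simp only [hi, if_false, ne_eq, hj, not_false_iff, and_true, if_true, x']
        try ring
    rw [key, rank_rowOp _ x' (fun i => if (i:V) = x then 0 else l * M i x) (if_pos rfl)]
  · -- column operation, via transpose
    have hx' : x ∈ Xᶜ := Finset.mem_compl.mpr hx
    set x' : (Xᶜ : Finset V) := ⟨x, hx'⟩
    rw [← Matrix.rank_transpose (M'.submatrix _ _), ← Matrix.rank_transpose (M.submatrix _ _)]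
    have key : (M'.submatrix (fun i : X => (i : V)) (fun j : (Xᶜ : Finset V) => (j : V)))ᵀ
        = Matrix.of (fun j i =>
            (M.submatrix (fun i : X => (i : V)) (fun j : (Xᶜ : Finset V) => (j : V)))ᵀ j i
            + (if (j : V) = x then 0 else l * M x j)
              * (M.submatrix (fun i : X => (i : V)) (fun j : (Xᶜ : Finset V) => (j : V)))ᵀ x' i) := by
      ext j i
      have hi : (i : V) ≠ x := by
        intro h; exact hx (h ▸ i.2)
      simp only [Matrix.transpose_apply, Matrix.submatrix_apply, Matrix.of_apply, hM']
      by_cases hj : (j : V) = x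
      · simp [hj, hi]
      · simp only [hj, if_false, ne_eq, hi, not_false_iff, true_and, if_true, x']
        try ring
    rw [key, rank_rowOp _ x' (fun j => if (j:V) = x then 0 else l * M x j) (if_pos rfl)]
end

section
/- Let F be a field, σ a sesqui-morphism on F, G a σ-symmetric F*-graph with adjacency matrix M, and x, y distinct vertices with M(x,y) ≠ 0. Define the pivot-complementation matrix N by: N(z,z)=0; for z,t ∉ {x,y}, z≠t: N(z,t) = M(z,t) − M(z,x)·M(y,t)/M(y,x) − M(z,y)·M(x,t)/M(x,y); N(x,t) = M(y,t)/M(y,x), N(y,t) = σ(1)·M(x,t)/M(x,y), N(z,x) = σ(1)·M(z,y)/M(x,y), N(z,y) = M(z,x)/M(y,x) for z,t ∉ {x,y}; N(x,y) = −1/M(y,x), N(y,x) = −σ(1)²/M(x,y). Then N is σ-symmetric: N(t,z) = σ(N(z,t)) for all z ≠ t. -/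
/-- Pivot-complementation of a σ-symmetric graph is σ-symmetric. -/
theorem pivot_sigmaSymmetric {F V : Type*} [Field F] [Fintype V] [DecidableEq V]
    (σ : F → F)
    (hinv : ∀ a : F, σ (σ a) = a)
    (hauto : ∃ e : F ≃+* F, ∀ x : F, e x = σ x / σ 1)
    (M : Matrix V V F) (hsym : ∀ z t : V, M z t = σ (M t z))
    (hdiag : ∀ z : V, M z z = 0)
    (x y : V) (hxy : x ≠ y) (hedge : M x y ≠ 0)
    (N : Matrix V V F)
    (hN : ∀ z t : V,
      N z t =
        if z = t then 0
        else if z = x ∧ t = y then -1 / M y x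
        else if z = y ∧ t = x then -(σ 1 ^ 2) / M x y
        else if z = x then M y t / M y x
        else if z = y then σ 1 * M x t / M x y
        else if t = x then σ 1 * M z y / M x y
        else if t = y then M z x / M y x
        else M z t - M z x * M y t / M y x - M z y * M x t / M x y) :
    ∀ z t : V, z ≠ t → N t z = σ (N z t) := by
  obtain ⟨e, he⟩ := hauto
  have hs : σ 1 ≠ 0 := by
    intro h
    have h1 : e 1 = 1 := map_one e
    rw [he 1, h, div_zero] at h1
    exact one_ne_zero h1.symm
  have hσ : ∀ a, σ a = e a * σ 1 := by
    intro a
    rw [he a, div_mul_cancel₀ _ hs]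
  have hes : e (σ 1) = (σ 1)⁻¹ := by
    have h1 : e (σ 1) * σ 1 = 1 := by rw [← hσ, hinv]
    field_simp at h1 ⊢
    linear_combination h1
  have hee : ∀ a, e (e a) = a := by
    intro a
    have h1 := hinv a
    rw [hσ a, hσ (e a * σ 1), map_mul, hes] at h1
    field_simp at h1
    linear_combination h1
  have hsym' : ∀ z t : V, M t z = e (M z t) * σ 1 := by
    intro z t
    rw [hsym t z, hσ]
  have hE : e (M x y) ≠ 0 := by
    intro h
    apply hedge
    have := congrArg e.symm h
    simpa using this
  have hMyx : M y x ≠ 0 := by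
    rw [hsym' x y]
    exact mul_ne_zero hE hs
  intro z t hzt
  have hts : t ≠ z := hzt.symm
  rw [hN t z, hN z t]
  by_cases hzx : z = x
  · by_cases hty : t = y
    · -- z = x, t = y
      simp only [if_neg hts, if_neg hzt,
        if_neg (show ¬(t = x ∧ z = y) from fun h => hxy (hty.symm.trans h.1).symm),
        if_pos (show t = y ∧ z = x from ⟨hty, hzx⟩),
        if_pos (show z = x ∧ t = y from ⟨hzx, hty⟩)]
      rw [hσ (-1 / M y x), hsym' x y]
      simp only [map_neg, map_div₀, map_one, map_mul, hee, hes]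
      field_simp
      try ring
      try tauto
    · -- z = x, t ∉ {x, y}
      have htx : t ≠ x := fun h => hts (h.trans hzx.symm)
      simp only [if_neg hts, if_neg hzt,
        if_neg (show ¬(t = x ∧ z = y) from fun h => htx h.1),
        if_neg (show ¬(t = y ∧ z = x) from fun h => hty h.1),
        if_neg htx, if_neg hty,
        if_neg (show ¬(z = x ∧ t = y) from fun h => hty h.2),
        if_neg (show ¬(z = y ∧ t = x) from fun h => htx h.2),
        if_pos hzx]
      rw [hσ (M y t / M y x), hsym' y t, hsym' x y]
      simp only [map_div₀, map_mul, hee, hes]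
      field_simp
      try ring
      try tauto
  · by_cases hzy : z = y
    · by_cases htx : t = x
      · -- z = y, t = x
        simp only [if_neg hts, if_neg hzt,
          if_pos (show t = x ∧ z = y from ⟨htx, hzy⟩),
          if_neg (show ¬(z = x ∧ t = y) from fun h => hzx h.1),
          if_pos (show z = y ∧ t = x from ⟨hzy, htx⟩)]
        rw [hσ (-(σ 1 ^ 2) / M x y), hsym' x y]
        simp only [map_neg, map_div₀, map_pow, map_mul, map_one, hee, hes]
        field_simp
        try ring
        try tauto
      · -- z = y, t ∉ {x, y}
        have hty : t ≠ y := fun h => hts (h.trans hzy.symm)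
        simp only [if_neg hts, if_neg hzt,
          if_neg (show ¬(t = x ∧ z = y) from fun h => htx h.1),
          if_neg (show ¬(t = y ∧ z = x) from fun h => hty h.1),
          if_neg htx, if_neg hty, if_neg hzx, if_pos hzy,
          if_neg (show ¬(z = x ∧ t = y) from fun h => hzx h.1),
          if_neg (show ¬(z = y ∧ t = x) from fun h => htx h.2)]
        rw [hσ (σ 1 * M x t / M x y), hsym' x t, hsym' x y]
        simp only [map_div₀, map_mul, hee, hes]
        field_simp
        try ring
        try tauto
    · by_cases htx : t = x
      · -- t = x, z ∉ {x, y}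
        simp only [if_neg hts, if_neg hzt,
          if_neg (show ¬(t = x ∧ z = y) from fun h => hzy h.2),
          if_neg (show ¬(t = y ∧ z = x) from fun h => hzx h.2),
          if_pos htx, if_neg hzx, if_neg hzy,
          if_neg (show ¬(z = x ∧ t = y) from fun h => hzx h.1),
          if_neg (show ¬(z = y ∧ t = x) from fun h => hzy h.1)]
        rw [hσ (σ 1 * M z y / M x y), hsym' z y, hsym' x y]
        simp only [map_div₀, map_mul, hee, hes]
        field_simp
        try ring
        try tauto
      · by_cases hty : t = y
        · -- t = y, z ∉ {x, y}
          simp only [if_neg hts, if_neg hzt,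
            if_neg (show ¬(t = x ∧ z = y) from fun h => htx h.1),
            if_neg (show ¬(t = y ∧ z = x) from fun h => hzx h.2),
            if_neg htx, if_pos hty, if_neg hzx, if_neg hzy,
            if_neg (show ¬(z = x ∧ t = y) from fun h => hzx h.1),
            if_neg (show ¬(z = y ∧ t = x) from fun h => hzy h.1)]
          rw [hσ (M z x / M y x), hsym' z x, hsym' x y]
          simp only [map_div₀, map_mul, hee, hes]
          field_simp
          try ring
          try tauto
        · -- generic case
          simp only [if_neg hts, if_neg hzt,
            if_neg (show ¬(t = x ∧ z = y) from fun h => htx h.1),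
            if_neg (show ¬(t = y ∧ z = x) from fun h => hty h.1),
            if_neg htx, if_neg hty, if_neg hzx, if_neg hzy,
            if_neg (show ¬(z = x ∧ t = y) from fun h => hzx h.1),
            if_neg (show ¬(z = y ∧ t = x) from fun h => hzy h.1)]
          rw [hσ (M z t - M z x * M y t / M y x - M z y * M x t / M x y),
            hsym' z t, hsym' x t, hsym' z y, hsym' y t, hsym' z x, hsym' x y]
          simp only [map_sub, map_div₀, map_mul, hee, hes]
          field_simp
          try ring
          try tauto
end

section
/- Let F be a field, σ a sesqui-morphism, λ ∈ F* σ-compatible, G a σ-symmetric F*-graph on V, and x ∈ V. Suppose (X₁, X₂) and (Y₁, Y₂) are partitions of V \ {x}. Then cutrk_{G−x}(X₁) + cutrk_{(G∗(x,λ))−x}(Y₁) ≥ cutrk_G(X₁ ∩ Y₁) + cutrk_G(X₂ ∩ Y₂) − 1. -/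
/-!
Let `N` be `M` with its `(x, x)` entry replaced by `-λ⁻¹`. Pivoting on that entry turns
`N[Y₁, Y₂]` into the corresponding block of `G∗(x,λ)`, so
`rk N[Y₁ + x, Y₂ + x] ≤ cutrk_{G∗(x,λ)−x}(Y₁) + 1`. Submodularity of submatrix rank, applied to
`N[X₁, X₂]` and `N[Y₁ + x, Y₂ + x]`, bounds the ranks of `N` on `(X₁ ∩ Y₁) × (X₁ ∩ Y₁)ᶜ` and
`(X₂ ∩ Y₂)ᶜ × (X₂ ∩ Y₂)`. Neither block contains the entry `(x, x)`, so both are blocks of `M`,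
and σ-symmetry (σ is `σ 1` times a field automorphism) lets us transpose the second one.
-/

open Module Submodule Finset Matrix

lemma Matrix.rank_map_ringEquiv {F m n : Type*} [Field F] [Fintype n] (e : F ≃+* F)
    (A : Matrix m n F) : (A.map e).rank = A.rank := by
  let Φ : (m → F) →ₛₗ[(e : F →+* F)] (m → F) :=
    { toFun := fun u => e ∘ u
      map_add' := fun u v => by ext; simp
      map_smul' := fun c u => by ext; simp }
  have hΦ : Function.Injective Φ := fun u v h => funext fun i => e.injective (congrFun h i)
  have hspan : (span F (Set.range A.col)).map Φ = span F (Set.range (A.map e).col) := by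
    rw [map_span, ← Set.range_comp]
    rfl
  have := RingHomInvPair.of_ringEquiv e
  have := RingHomInvPair.of_ringEquiv_symm e
  rw [rank_eq_finrank_span_cols, rank_eq_finrank_span_cols, ← hspan]
  let j := equivMapOfInjective Φ hΦ (span F (Set.range A.col))
  exact congrArg Cardinal.toNat (rank_eq_of_equiv_equiv e j.toAddEquiv e.bijective j.map_smulₛₗ).symm

section Finrank

variable {F E : Type*} [Field F] [AddCommGroup E] [Module F E] [FiniteDimensional F E]

lemma finrank_map_add_finrank_inf_ker {G : Type*} [AddCommGroup G] [Module F G]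
    (f : E →ₗ[F] G) (U : Submodule F E) :
    finrank F (U.map f) + finrank F ↥(U ⊓ LinearMap.ker f) = finrank F U := by
  have h := (f.domRestrict U).finrank_range_add_finrank_ker
  rwa [LinearMap.range_domRestrict, LinearMap.ker_domRestrict,
    (equivSubtypeMap U _).finrank_eq, map_comap_subtype] at h

lemma finrank_map_eq_of_inf_ker_eq {G G' : Type*} [AddCommGroup G] [Module F G]
    [AddCommGroup G'] [Module F G'] {f : E →ₗ[F] G} {g : E →ₗ[F] G'} {U : Submodule F E}
    (h : U ⊓ LinearMap.ker f = U ⊓ LinearMap.ker g) :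
    finrank F (U.map f) = finrank F (U.map g) := by
  have hf := finrank_map_add_finrank_inf_ker f U
  have hg := finrank_map_add_finrank_inf_ker g U
  rw [h] at hf
  omega

lemma finrank_map_sup_add_finrank_map_inf_le {G₁ G₂ G G' : Type*}
    [AddCommGroup G₁] [Module F G₁] [AddCommGroup G₂] [Module F G₂]
    [AddCommGroup G] [Module F G] [AddCommGroup G'] [Module F G']
    (U₁ U₂ : Submodule F E) (f₁ : E →ₗ[F] G₁) (f₂ : E →ₗ[F] G₂) (g : E →ₗ[F] G)
    (h : E →ₗ[F] G') (hg : LinearMap.ker f₁ ⊔ LinearMap.ker f₂ ≤ LinearMap.ker g)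
    (hh : LinearMap.ker f₁ ⊓ LinearMap.ker f₂ ≤ LinearMap.ker h) :
    finrank F ((U₁ ⊔ U₂).map g) + finrank F ((U₁ ⊓ U₂).map h)
      ≤ finrank F (U₁.map f₁) + finrank F (U₂.map f₂) := by
  have h₁ := finrank_map_add_finrank_inf_ker f₁ U₁
  have h₂ := finrank_map_add_finrank_inf_ker f₂ U₂
  have hsup := finrank_map_add_finrank_inf_ker g (U₁ ⊔ U₂)
  have hinf := finrank_map_add_finrank_inf_ker h (U₁ ⊓ U₂)
  have hU := finrank_sup_add_finrank_inf_eq U₁ U₂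
  have hK := finrank_sup_add_finrank_inf_eq (U₁ ⊓ LinearMap.ker f₁) (U₂ ⊓ LinearMap.ker f₂)
  have hKsup : finrank F ↥(U₁ ⊓ LinearMap.ker f₁ ⊔ U₂ ⊓ LinearMap.ker f₂)
      ≤ finrank F ↥((U₁ ⊔ U₂) ⊓ LinearMap.ker g) :=
    finrank_mono <| sup_le (inf_le_inf le_sup_left (le_sup_left.trans hg))
      (inf_le_inf le_sup_right (le_sup_right.trans hg))
  have hKinf : finrank F ↥(U₁ ⊓ LinearMap.ker f₁ ⊓ (U₂ ⊓ LinearMap.ker f₂))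
      ≤ finrank F ↥((U₁ ⊓ U₂) ⊓ LinearMap.ker h) :=
    finrank_mono <| le_inf (inf_le_inf inf_le_left inf_le_left)
      ((le_inf (inf_le_left.trans inf_le_right) (inf_le_right.trans inf_le_right)).trans hh)
  omega

lemma finrank_map_span_singleton_sup_le {G : Type*} [AddCommGroup G] [Module F G]
    (f : E →ₗ[F] G) (v : E) (U : Submodule F E) :
    finrank F ((span F {v} ⊔ U).map f) ≤ finrank F (U.map f) + 1 := by
  rw [Submodule.map_sup, map_span, Set.image_singleton, add_comm]
  exact (finrank_add_le_finrank_add_finrank _ _).trans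
    (Nat.add_le_add_right (by simpa using finrank_span_le_card ({f v} : Set G)) _)

end Finrank

section Submatrix

variable {F m n : Type*} [Field F]

noncomputable def restrictRows (F : Type*) [Field F] (R : Finset m) : (m → F) →ₗ[F] (R → F) :=
  LinearMap.funLeft F F Subtype.val

lemma mem_ker_restrictRows {R : Finset m} {u : m → F} :
    u ∈ LinearMap.ker (restrictRows F R) ↔ ∀ i ∈ R, u i = 0 := by
  simp [restrictRows, funext_iff, LinearMap.funLeft_apply]

noncomputable def colSpan (M : Matrix m n F) (C : Finset n) : Submodule F (m → F) :=
  span F (M.col '' C)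

variable [Fintype m] [Fintype n]

lemma rkSub_eq_finrank_map_colSpan (M : Matrix m n F) (R : Finset m) (C : Finset n) :
    rkSub M R C = finrank F ((colSpan M C).map (restrictRows F R)) := by
  rw [rkSub, rank_eq_finrank_span_cols, colSpan, map_span, ← Set.image_comp,
    Set.image_eq_range]
  rfl

lemma rkSub_congr {M N : Matrix m n F} {R : Finset m} {C : Finset n}
    (h : ∀ i ∈ R, ∀ j ∈ C, M i j = N i j) : rkSub M R C = rkSub N R C := by
  unfold rkSub
  congr 1
  ext i j
  exact h i i.2 j j.2

lemma rkSub_comm_of_forall_eq_sesqui {M : Matrix m m F} {σ : F → F} (e : F ≃+* F)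
    (he : ∀ a, e a = σ a / σ 1) (hM : ∀ z t, M z t = σ (M t z)) (R C : Finset m) :
    rkSub M R C = rkSub M C R := by
  have hσ1 : σ 1 ≠ 0 := fun h => by simpa [h] using he 1
  have h : M.submatrix (fun j : C => (j : m)) (fun i : R => (i : m))
      = σ 1 • ((M.submatrix (fun i : R => (i : m)) (fun j : C => (j : m))).map e)ᵀ := by
    ext j i
    simp [he, hM j i, mul_div_cancel₀ _ hσ1]
  rw [rkSub, rkSub, h, rank_smul_of_mem_nonZeroDivisors _ (mem_nonZeroDivisors_of_ne_zero hσ1),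
    rank_transpose, rank_map_ringEquiv]

variable [DecidableEq m]

lemma rkSub_insert_of_row_eq_zero {N : Matrix m n F} {x : m} {C : Finset n}
    (h : ∀ j ∈ C, N x j = 0) (R : Finset m) : rkSub N (insert x R) C = rkSub N R C := by
  have hx : colSpan N C ≤ LinearMap.ker (LinearMap.proj x) :=
    span_le.2 (by rintro _ ⟨j, hj, rfl⟩; exact h j hj)
  simp only [rkSub_eq_finrank_map_colSpan]
  refine finrank_map_eq_of_inf_ker_eq (ext fun u => ?_)
  simp only [Submodule.mem_inf, mem_ker_restrictRows, forall_mem_insert]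
  exact ⟨fun ⟨hu, _, hR⟩ => ⟨hu, hR⟩, fun ⟨hu, hR⟩ => ⟨hu, hx hu, hR⟩⟩

variable [DecidableEq n]

theorem rkSub_insert_insert_le_pivot (N : Matrix m n F) {x : m} {y : n} (hxy : N x y ≠ 0)
    (R : Finset m) (C : Finset n) :
    rkSub N (insert x R) (insert y C)
      ≤ rkSub (N - (N x y)⁻¹ • vecMulVec (N.col y) (N.row x)) R C + 1 := by
  set S := N - (N x y)⁻¹ • vecMulVec (N.col y) (N.row x)
  have hcol : ∀ j, N.col j = S.col j + ((N x y)⁻¹ * N x j) • N.col y := fun j => by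
    ext i
    simp [S, vecMulVec_apply]
    ring
  have hrow : ∀ j, S x j = 0 := fun j => by
    simp [S, vecMulVec_apply, hxy]
  have hspan : colSpan N (insert y C) ≤ span F {N.col y} ⊔ colSpan S C := by
    refine span_le.2 ?_
    rintro _ ⟨j, hj, rfl⟩
    rcases mem_insert.1 hj with rfl | hj
    · exact mem_sup_left (mem_span_singleton_self _)
    · rw [hcol j]
      exact add_mem (mem_sup_right (subset_span ⟨j, hj, rfl⟩))
        (mem_sup_left (smul_mem _ _ (mem_span_singleton_self _)))
  calc rkSub N (insert x R) (insert y C)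
      ≤ finrank F ((span F {N.col y} ⊔ colSpan S C).map (restrictRows F (insert x R))) := by
        rw [rkSub_eq_finrank_map_colSpan]
        exact finrank_mono (map_mono hspan)
    _ ≤ rkSub S (insert x R) C + 1 := by
        rw [rkSub_eq_finrank_map_colSpan]
        exact finrank_map_span_singleton_sup_le _ _ _
    _ = rkSub S R C + 1 := by
        rw [rkSub_insert_of_row_eq_zero (fun j _ => hrow j)]

theorem rkSub_submodular (M : Matrix m n F) (R₁ R₂ : Finset m) (C₁ C₂ : Finset n) :
    rkSub M (R₁ ∩ R₂) (C₁ ∪ C₂) + rkSub M (R₁ ∪ R₂) (C₁ ∩ C₂)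
      ≤ rkSub M R₁ C₁ + rkSub M R₂ C₂ := by
  simp only [rkSub_eq_finrank_map_colSpan]
  have hcols : colSpan M (C₁ ∪ C₂) = colSpan M C₁ ⊔ colSpan M C₂ := by
    rw [colSpan, coe_union, Set.image_union, span_union]; rfl
  have hinter : colSpan M (C₁ ∩ C₂) ≤ colSpan M C₁ ⊓ colSpan M C₂ :=
    le_inf (span_mono (Set.image_mono (by simp))) (span_mono (Set.image_mono (by simp)))
  refine le_trans ?_ (finrank_map_sup_add_finrank_map_inf_le _ _ _ _
    (restrictRows F (R₁ ∩ R₂)) (restrictRows F (R₁ ∪ R₂)) ?_ ?_)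
  · rw [hcols]
    exact Nat.add_le_add_left (finrank_mono (map_mono hinter)) _
  · refine sup_le (fun u hu => ?_) (fun u hu => ?_) <;>
      rw [mem_ker_restrictRows] at hu ⊢ <;> intro i hi
    exacts [hu i (mem_inter.1 hi).1, hu i (mem_inter.1 hi).2]
  · rintro u ⟨hu₁, hu₂⟩
    rw [SetLike.mem_coe, mem_ker_restrictRows] at hu₁ hu₂
    rw [mem_ker_restrictRows]
    intro i hi
    exact (mem_union.1 hi).elim (hu₁ i) (hu₂ i)

end Submatrix

section LocalComplementation

variable {F m n : Type*} [Field F] [DecidableEq m] [DecidableEq n]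

def Matrix.updateEntry (M : Matrix m n F) (x : m) (y : n) (a : F) : Matrix m n F :=
  of fun z t => if z = x ∧ t = y then a else M z t

variable [Fintype m] [Fintype n]

lemma rkSub_updateEntry_of_notMem (M : Matrix m n F) {x : m} {y : n} (a : F) {R : Finset m}
    {C : Finset n} (h : x ∉ R ∨ y ∉ C) : rkSub (M.updateEntry x y a) R C = rkSub M R C :=
  rkSub_congr fun z hz t ht => by
    simp only [updateEntry, of_apply, ite_eq_right_iff, and_imp]
    rintro rfl rfl
    exact (h.elim (· hz) (· ht)).elim

lemma rkSub_updateEntry_insert_insert_le {M M' : Matrix m m F} {x : m} {l : F} (hl : l ≠ 0)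
    (hM' : ∀ z t, M' z t = if z ≠ x ∧ t ≠ x then M z t + l * M z x * M x t else M z t)
    {R C : Finset m} (hR : x ∉ R) (hC : x ∉ C) :
    rkSub (M.updateEntry x x (-l⁻¹)) (insert x R) (insert x C) ≤ rkSub M' R C + 1 := by
  refine (rkSub_insert_insert_le_pivot _ (by simp [updateEntry, hl]) R C).trans
    (Nat.add_le_add_right (rkSub_congr fun z hz t ht => ?_).le 1)
  have hzx : z ≠ x := ne_of_mem_of_not_mem hz hR
  have htx : t ≠ x := ne_of_mem_of_not_mem ht hC
  simp [updateEntry, hM', hzx, htx, vecMulVec_apply]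
  field_simp

end LocalComplementation

section Partition

variable {V : Type*} [Fintype V] [DecidableEq V] {X₁ X₂ Y₁ Y₂ : Finset V} {x : V}

lemma notMem_of_union_eq_compl_singleton (h : X₁ ∪ X₂ = {x}ᶜ) : x ∉ X₁ := fun hx => by
  simpa [h] using mem_union_left X₂ hx

lemma union_insert_eq_compl_inter (hX : X₁ ∪ X₂ = {x}ᶜ) (hXd : Disjoint X₁ X₂)
    (hY : Y₁ ∪ Y₂ = {x}ᶜ) (hYd : Disjoint Y₁ Y₂) : X₂ ∪ insert x Y₂ = (X₁ ∩ Y₁)ᶜ := by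
  ext z
  have hXz := Finset.ext_iff.1 hX z
  have hYz := Finset.ext_iff.1 hY z
  have hXdz : z ∈ X₁ → z ∉ X₂ := fun h => disjoint_left.1 hXd h
  have hYdz : z ∈ Y₁ → z ∉ Y₂ := fun h => disjoint_left.1 hYd h
  simp only [mem_union, mem_insert, mem_compl, mem_inter, mem_singleton] at hXz hYz ⊢
  tauto

end Partition

theorem localComp_delete_cutrank_ineq_general {F V : Type*} [Field F] [Fintype V] [DecidableEq V]
    (σ : F → F)
    (hauto : ∃ e : F ≃+* F, ∀ x : F, e x = σ x / σ 1)
    (l : F) (hl : l ≠ 0)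
    (M : Matrix V V F) (hsym : ∀ z t : V, M z t = σ (M t z))
    (x : V)
    (M' : Matrix V V F)
    (hM' : ∀ z t : V,
      M' z t = if z ≠ x ∧ t ≠ x then M z t + l * M z x * M x t else M z t)
    (X₁ X₂ Y₁ Y₂ : Finset V)
    (hXpart : X₁ ∪ X₂ = ({x} : Finset V)ᶜ) (hXdisj : Disjoint X₁ X₂)
    (hYpart : Y₁ ∪ Y₂ = ({x} : Finset V)ᶜ) (hYdisj : Disjoint Y₁ Y₂) :
    rkSub M X₁ X₂ + rkSub M' Y₁ Y₂ + 1
      ≥ rkSub M (X₁ ∩ Y₁) (X₁ ∩ Y₁)ᶜ + rkSub M (X₂ ∩ Y₂) (X₂ ∩ Y₂)ᶜ := by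
  obtain ⟨e, he⟩ := hauto
  have hxX₁ := notMem_of_union_eq_compl_singleton hXpart
  have hxX₂ := notMem_of_union_eq_compl_singleton ((union_comm X₂ X₁).trans hXpart)
  have hxY₁ := notMem_of_union_eq_compl_singleton hYpart
  have hxY₂ := notMem_of_union_eq_compl_singleton ((union_comm Y₂ Y₁).trans hYpart)
  have hsub := rkSub_submodular (M.updateEntry x x (-l⁻¹)) X₁ (insert x Y₁) X₂ (insert x Y₂)
  rw [inter_insert_of_notMem hxX₁, inter_insert_of_notMem hxX₂,
    union_insert_eq_compl_inter hXpart hXdisj hYpart hYdisj,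
    union_insert_eq_compl_inter ((union_comm X₂ X₁).trans hXpart) hXdisj.symm
      ((union_comm Y₂ Y₁).trans hYpart) hYdisj.symm,
    rkSub_updateEntry_of_notMem _ _ (.inl hxX₁),
    rkSub_updateEntry_of_notMem _ _ (.inl (notMem_mono inter_subset_left hxX₁)),
    rkSub_updateEntry_of_notMem _ _ (.inr (notMem_mono inter_subset_left hxX₂)),
    rkSub_comm_of_forall_eq_sesqui e he hsym (X₂ ∩ Y₂)ᶜ] at hsub
  have hpivot := rkSub_updateEntry_insert_insert_le hl hM' hxY₁ hxY₂
  omega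

/-- For partitions `(X₁,X₂)` and `(Y₁,Y₂)` of `V \ {x}`:
`cutrk_{G−x}(X₁) + cutrk_{(G∗(x,λ))−x}(Y₁) ≥ cutrk_G(X₁ ∩ Y₁) + cutrk_G(X₂ ∩ Y₂) − 1`. -/
theorem localComp_delete_cutrank_ineq {F V : Type*} [Field F] [Fintype V] [DecidableEq V]
    (σ : F → F)
    (hinv : ∀ a : F, σ (σ a) = a)
    (hauto : ∃ e : F ≃+* F, ∀ x : F, e x = σ x / σ 1)
    (l : F) (hl : l ≠ 0) (hcompat : σ l = l * σ 1 ^ 2)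
    (M : Matrix V V F) (hsym : ∀ z t : V, M z t = σ (M t z))
    (hdiag : ∀ z : V, M z z = 0)
    (x : V)
    (M' : Matrix V V F)
    (hM' : ∀ z t : V,
      M' z t = if z ≠ x ∧ t ≠ x then M z t + l * M z x * M x t else M z t)
    (X₁ X₂ Y₁ Y₂ : Finset V)
    (hXpart : X₁ ∪ X₂ = ({x} : Finset V)ᶜ) (hXdisj : Disjoint X₁ X₂)
    (hYpart : Y₁ ∪ Y₂ = ({x} : Finset V)ᶜ) (hYdisj : Disjoint Y₁ Y₂) :
    rkSub M X₁ X₂ + rkSub M' Y₁ Y₂ + 1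
      ≥ rkSub M (X₁ ∩ Y₁) (X₁ ∩ Y₁)ᶜ + rkSub M (X₂ ∩ Y₂) (X₂ ∩ Y₂)ᶜ :=
  localComp_delete_cutrank_ineq_general σ hauto l hl M hsym x M' hM' X₁ X₂ Y₁ Y₂ hXpart hXdisj
    hYpart hYdisj
end

section
/- Let F be a field, σ a sesqui-morphism, G a σ-symmetric F*-graph on V with adjacency matrix M, and xy an edge of G. For every subset X of V \ {x}: cutrk_{(G∧xy)−x}(X) = rk [ [0, M(x, V\(X∪{x}))]; [M(X,x), M(X, V\(X∪{x}))] ] − 1. -/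
open Matrix

namespace Matrix

variable {F m n : Type*} [Field F] [Fintype n]

theorem mulVec_option_apply (A : Matrix m (Option n) F) (v : Option n → F) (i : m) :
    (A *ᵥ v) i = A i none * v none + (fun j => A i (some j)) ⬝ᵥ (fun j => v (some j)) := by
  simp [mulVec, dotProduct, Fintype.sum_option]

def schurComplementNone (A : Matrix (Option m) (Option n) F) : Matrix m n F :=
  of fun i j => A (some i) (some j) - A (some i) none * A none (some j) / A none none

theorem schurComplementNone_mulVec_apply (A : Matrix (Option m) (Option n) F) (u : n → F)
    (i : m) : (schurComplementNone A *ᵥ u) i = (fun j => A (some i) (some j)) ⬝ᵥ u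
      - A (some i) none * ((fun j => A none (some j)) ⬝ᵥ u) / A none none := by
  simp only [schurComplementNone, mulVec, dotProduct, of_apply, sub_mul, Finset.sum_sub_distrib,
    Finset.mul_sum, Finset.sum_div]
  exact congrArg _ (Finset.sum_congr rfl fun j _ => by ring)

/-- Extends `u` by the value at `none` that solves the equation of the row `none` of `A`. -/
def extendNone (A : Matrix (Option m) (Option n) F) : (n → F) →ₗ[F] (Option n → F) where
  toFun u o := o.elim (-((fun j => A none (some j)) ⬝ᵥ u) / A none none) u
  map_add' u v := by
    funext o; cases o <;> simp [dotProduct_add]; ring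
  map_smul' c u := by
    funext o; cases o <;> simp [dotProduct_smul]; ring

theorem extendNone_injective (A : Matrix (Option m) (Option n) F) :
    Function.Injective (extendNone A) :=
  fun _ _ h => funext fun j => congrFun h (some j)

theorem ker_mulVecLin_eq_map_extendNone (A : Matrix (Option m) (Option n) F)
    (ha : A none none ≠ 0) :
    LinearMap.ker A.mulVecLin
      = (LinearMap.ker (schurComplementNone A).mulVecLin).map (extendNone A) := by
  ext v
  simp only [LinearMap.mem_ker, mulVecLin_apply, Submodule.mem_map]
  constructor
  · intro hv
    have hnone := congrFun hv none
    rw [Pi.zero_apply, mulVec_option_apply] at hnone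
    refine ⟨fun j => v (some j), funext fun i => ?_, funext fun o => ?_⟩
    · have hi := congrFun hv (some i)
      rw [Pi.zero_apply, mulVec_option_apply] at hi
      rw [Pi.zero_apply, schurComplementNone_mulVec_apply]
      field_simp
      linear_combination A none none * hi - A (some i) none * hnone
    · cases o with
      | none =>
        change -(_ ⬝ᵥ _) / A none none = v none
        field_simp
        linear_combination -hnone
      | some j => rfl
  · rintro ⟨u, hu, rfl⟩
    funext o
    rw [Pi.zero_apply, mulVec_option_apply]
    change A o none * (-(_ ⬝ᵥ u) / A none none) + _ ⬝ᵥ u = 0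
    cases o with
    | none =>
      field_simp
      ring
    | some i =>
      have hi := congrFun hu i
      rw [Pi.zero_apply, schurComplementNone_mulVec_apply] at hi
      linear_combination hi

theorem rank_eq_rank_schurComplementNone_add_one (A : Matrix (Option m) (Option n) F)
    (ha : A none none ≠ 0) : A.rank = (schurComplementNone A).rank + 1 := by
  have hA := LinearMap.finrank_range_add_finrank_ker A.mulVecLin
  have hS := LinearMap.finrank_range_add_finrank_ker (schurComplementNone A).mulVecLin
  rw [ker_mulVecLin_eq_map_extendNone A ha,
    ← (Submodule.equivMapOfInjective _ (extendNone_injective A) _).finrank_eq] at hA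
  simp only [Module.finrank_fintype_fun_eq_card, Fintype.card_option] at hA hS
  rw [rank, rank]
  omega

theorem rank_eq_of_column_ops {S N : Matrix m n F} {j₀ : n} {c : F} (hc : c ≠ 0)
    (v : n → F) (h₀ : ∀ i, N i j₀ = c * S i j₀)
    (h : ∀ i j, j ≠ j₀ → N i j = S i j + v j * S i j₀) :
    N.rank = S.rank := by
  have hN₀ : N.col j₀ = c • S.col j₀ := funext fun i => h₀ i
  have hN : ∀ j, j ≠ j₀ → N.col j = S.col j + v j • S.col j₀ :=
    fun j hj => funext fun i => h i j hj
  have hS₀ : S.col j₀ = c⁻¹ • N.col j₀ := by rw [hN₀, inv_smul_smul₀ hc]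
  suffices Submodule.span F (Set.range N.col) = Submodule.span F (Set.range S.col) by
    rw [rank_eq_finrank_span_cols, rank_eq_finrank_span_cols, this]
  apply le_antisymm <;> rw [Submodule.span_le] <;> rintro _ ⟨j, rfl⟩
  · by_cases hj : j = j₀
    · subst hj
      rw [hN₀]
      exact Submodule.smul_mem _ _ (Submodule.subset_span ⟨j, rfl⟩)
    · rw [hN j hj]
      exact Submodule.add_mem _ (Submodule.subset_span ⟨j, rfl⟩)
        (Submodule.smul_mem _ _ (Submodule.subset_span ⟨j₀, rfl⟩))
  · by_cases hj : j = j₀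
    · subst hj
      rw [hS₀]
      exact Submodule.smul_mem _ _ (Submodule.subset_span ⟨j, rfl⟩)
    · rw [eq_sub_of_add_eq (hN j hj).symm, hS₀]
      exact Submodule.sub_mem _ (Submodule.subset_span ⟨j, rfl⟩)
        (Submodule.smul_mem _ _ (Submodule.smul_mem _ _ (Submodule.subset_span ⟨j₀, rfl⟩)))

theorem rank_eq_rank_pivot_add_one [DecidableEq n] (B : Matrix (Option m) (Option n) F)
    (h₀ : B none none = 0) {j₀ : n} (hp : B none (some j₀) ≠ 0) :
    B.rank = (of fun i j => if j = j₀ then B (some i) none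
      else B (some i) (some j) - B none (some j) * B (some i) (some j₀) / B none (some j₀)).rank
      + 1 := by
  rw [← rank_submatrix B (Equiv.refl _) (Equiv.swap none (some j₀)),
    rank_eq_rank_schurComplementNone_add_one _ (by simpa using hp)]
  congr 2
  ext i j
  by_cases hj : j = j₀
  · subst hj
    simp [schurComplementNone, h₀]
  · simp [schurComplementNone, hj, Equiv.swap_apply_of_ne_of_ne, mul_comm]

end Matrix

theorem rkSub_insert_eq_rank_submatrix_option {V W F : Type*} [Fintype V] [Fintype W]
    [DecidableEq V] [DecidableEq W] [Field F] (M : Matrix V W F) {X : Finset V} {Y : Finset W}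
    {x : V} {x' : W} (hx : x ∉ X) (hx' : x' ∈ Y) :
    rkSub M (insert x X) Y = (M.submatrix (fun o : Option X => o.elim x (↑))
      (fun o : Option (Y.erase x') => o.elim x' (↑))).rank := by
  let eY : Option (Y.erase x') ≃ Y :=
    (Finset.subtypeInsertEquivOption (Finset.notMem_erase x' Y)).symm.trans
      (Equiv.subtypeEquivRight fun _ => by rw [Finset.insert_erase hx'])
  rw [rkSub, ← rank_submatrix _ (Finset.subtypeInsertEquivOption hx).symm eY,
    submatrix_submatrix]
  congr <;> funext o <;> cases o <;> rfl

section Pivot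

variable {F V : Type*} [Field F] [DecidableEq V]

/-- The adjacency matrix of the pivot-complement `G ∧ xy`, where `M` is that of `G`. -/
def pivotMatrix (σ : F → F) (M : Matrix V V F) (x y : V) : Matrix V V F :=
  of fun z t =>
    if z = t then 0
    else if z = x ∧ t = y then -1 / M y x
    else if z = y ∧ t = x then -(σ 1 ^ 2) / M x y
    else if z = x then M y t / M y x
    else if z = y then σ 1 * M x t / M x y
    else if t = x then σ 1 * M z y / M x y
    else if t = y then M z x / M y x
    else M z t - M z x * M y t / M y x - M z y * M x t / M x y

variable (σ : F → F) (M : Matrix V V F) {x y : V} {X Y : Finset V}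

theorem rank_pivotMatrix_submatrix_add_one_of_mem_right
    (hXY : Disjoint X Y) (hxX : x ∉ X) (hxY : x ∉ Y) (hy : y ∈ Y)
    (hxx : M x x = 0) (hxy : M x y ≠ 0) (hyx : M y x ≠ 0) :
    ((pivotMatrix σ M x y).submatrix ((↑) : X → V) ((↑) : Y → V)).rank + 1
      = (M.submatrix (fun o : Option X => o.elim x (↑))
          (fun o : Option Y => o.elim x (↑))).rank := by
  rw [rank_eq_rank_pivot_add_one _ hxx (j₀ := ⟨y, hy⟩) hxy]
  congr 1
  apply rank_eq_of_column_ops (j₀ := ⟨y, hy⟩) (inv_ne_zero hyx)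
    (fun j : Y => -(M y j / M y x))
  · intro i
    simp [pivotMatrix, ne_of_mem_of_not_mem i.2 (Finset.disjoint_right.1 hXY hy),
      ne_of_mem_of_not_mem i.2 hxX, ne_of_mem_of_not_mem hy hxY]
    ring
  · intro i j hj
    simp [pivotMatrix, hj, Subtype.coe_ne_coe.2 hj, ne_of_mem_of_not_mem i.2 hxX,
      ne_of_mem_of_not_mem j.2 hxY, ne_of_mem_of_not_mem i.2 (Finset.disjoint_right.1 hXY hy),
      ne_of_mem_of_not_mem i.2 (Finset.disjoint_right.1 hXY j.2)]
    ring

theorem rank_pivotMatrix_submatrix_add_one_of_mem_left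
    (hXY : Disjoint X Y) (hxX : x ∉ X) (hxY : x ∉ Y) (hy : y ∈ X)
    (hxx : M x x = 0) (hxy : M x y ≠ 0) (hyx : M y x ≠ 0) (hσ : σ 1 ≠ 0) :
    ((pivotMatrix σ M x y).submatrix ((↑) : X → V) ((↑) : Y → V)).rank + 1
      = (M.submatrix (fun o : Option X => o.elim x (↑))
          (fun o : Option Y => o.elim x (↑))).rank := by
  rw [← rank_transpose (M.submatrix _ _), transpose_submatrix,
    rank_eq_rank_pivot_add_one _ hxx (j₀ := ⟨y, hy⟩) hyx,
    ← rank_transpose ((pivotMatrix σ M x y).submatrix _ _), transpose_submatrix]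
  congr 1
  apply rank_eq_of_column_ops (j₀ := ⟨y, hy⟩) (div_ne_zero hσ hxy)
    (fun i : X => -(M i y / M x y))
  · intro j
    simp [pivotMatrix, ne_of_mem_of_not_mem hy (Finset.disjoint_right.1 hXY j.2),
      ne_of_mem_of_not_mem j.2 hxY, ne_of_mem_of_not_mem hy hxX]
    ring
  · intro j i hi
    simp [pivotMatrix, hi, Subtype.coe_ne_coe.2 hi, ne_of_mem_of_not_mem i.2 hxX,
      ne_of_mem_of_not_mem j.2 hxY, ne_of_mem_of_not_mem j.2 (Finset.disjoint_left.1 hXY hy),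
      ne_of_mem_of_not_mem i.2 (Finset.disjoint_right.1 hXY j.2)]
    ring

end Pivot

section Sesqui

variable {F : Type*} [Field F] {σ : F → F} {e : F ≃+* F}

theorem sesqui_one_ne_zero (he : ∀ a, e a = σ a / σ 1) : σ 1 ≠ 0 := by
  intro h
  have := he 1
  rw [h, div_zero, map_one] at this
  exact one_ne_zero this

theorem sesqui_ne_zero (he : ∀ a, e a = σ a / σ 1) {a : F} (ha : a ≠ 0) : σ a ≠ 0 := by
  intro h
  have := he a
  rw [h, zero_div, map_eq_zero_iff e e.injective] at this
  exact ha this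

end Sesqui

theorem pivot_delete_cutrank_general {F V : Type*} [Field F] [Fintype V] [DecidableEq V]
    (σ : F → F)
    (hauto : ∃ e : F ≃+* F, ∀ x : F, e x = σ x / σ 1)
    (M : Matrix V V F) (hsym : ∀ z t : V, M z t = σ (M t z))
    (hdiag : ∀ z : V, M z z = 0)
    (x y : V) (hxy : x ≠ y) (hedge : M x y ≠ 0)
    (N : Matrix V V F)
    (hN : ∀ z t : V,
      N z t =
        if z = t then 0
        else if z = x ∧ t = y then -1 / M y x
        else if z = y ∧ t = x then -(σ 1 ^ 2) / M x y
        else if z = x then M y t / M y x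
        else if z = y then σ 1 * M x t / M x y
        else if t = x then σ 1 * M z y / M x y
        else if t = y then M z x / M y x
        else M z t - M z x * M y t / M y x - M z y * M x t / M x y) :
    ∀ X : Finset V, x ∉ X →
      rkSub N X (Xᶜ.erase x) = rkSub M (insert x X) Xᶜ - 1 := by
  obtain rfl : N = pivotMatrix σ M x y := Matrix.ext hN
  obtain ⟨e, he⟩ := hauto
  have hyx : M y x ≠ 0 := by rw [hsym]; exact sesqui_ne_zero he hedge
  intro X hx
  have hXY : Disjoint X (Xᶜ.erase x) := disjoint_compl_right.mono_right (Finset.erase_subset _ _)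
  have hxY : x ∉ Xᶜ.erase x := Finset.notMem_erase x _
  rw [rkSub_insert_eq_rank_submatrix_option M hx (Finset.mem_compl.2 hx)]
  refine Nat.eq_sub_of_add_eq ?_
  by_cases hy : y ∈ X
  · exact rank_pivotMatrix_submatrix_add_one_of_mem_left σ M hXY hx hxY hy
      (hdiag x) hedge hyx (sesqui_one_ne_zero he)
  · have hyY : y ∈ Xᶜ.erase x := Finset.mem_erase.2 ⟨hxy.symm, Finset.mem_compl.2 hy⟩
    exact rank_pivotMatrix_submatrix_add_one_of_mem_right σ M hXY hx hxY hyY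
      (hdiag x) hedge hyx

/-- Cut-rank in `(G ∧ xy) − x` expressed via a rank of a bordered matrix of `G`
(the corner `(x,x)` entry being `0 = M x x`). -/
theorem pivot_delete_cutrank {F V : Type*} [Field F] [Fintype V] [DecidableEq V]
    (σ : F → F)
    (hinv : ∀ a : F, σ (σ a) = a)
    (hauto : ∃ e : F ≃+* F, ∀ x : F, e x = σ x / σ 1)
    (M : Matrix V V F) (hsym : ∀ z t : V, M z t = σ (M t z))
    (hdiag : ∀ z : V, M z z = 0)
    (x y : V) (hxy : x ≠ y) (hedge : M x y ≠ 0)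
    (N : Matrix V V F)
    (hN : ∀ z t : V,
      N z t =
        if z = t then 0
        else if z = x ∧ t = y then -1 / M y x
        else if z = y ∧ t = x then -(σ 1 ^ 2) / M x y
        else if z = x then M y t / M y x
        else if z = y then σ 1 * M x t / M x y
        else if t = x then σ 1 * M z y / M x y
        else if t = y then M z x / M y x
        else M z t - M z x * M y t / M y x - M z y * M x t / M x y) :
    ∀ X : Finset V, x ∉ X →
      rkSub N X (Xᶜ.erase x) = rkSub M (insert x X) Xᶜ - 1 :=
  pivot_delete_cutrank_general σ hauto M hsym hdiag x y hxy hedge N hN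
end

section
/- Let F be a field, G an F*-graph with adjacency matrix M on V, λ ∈ F*, x a vertex, and M' the matrix of the λ-local complementation of G at x. Then for every subset X ⊆ V: rk(M'[X, V\X]) + rk(M'[V\X, X]) = rk(M[X, V\X]) + rk(M[V\X, X]). That is, λ-local complementation preserves the bi-cut-rank function. -/
open Matrix

namespace Matrix

variable {m n R : Type*} [Fintype m] [Fintype n] [DecidableEq m] [CommRing R]

theorem rank_add_vecMulVec_row (B : Matrix m n R) (i₀ : m) (c : m → R) (hc : c i₀ = 0) :
    (B + vecMulVec c (B.row i₀)).rank = B.rank := by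
  set u := vecMulVec c (Pi.single i₀ (1 : R))
  have hu : IsNilpotent u := ⟨2, by
    rw [sq, vecMulVec_mul_vecMulVec, single_dotProduct, hc, mul_zero, zero_smul]
    exact vecMulVec_zero c⟩
  have hB : B + vecMulVec c (B.row i₀) = (1 + u) * B := by
    rw [Matrix.add_mul, Matrix.one_mul, vecMulVec_mul, single_one_vecMul]
  rw [hB, rank_mul_eq_right_of_isUnit_det _ _ ((isUnit_iff_isUnit_det _).mp hu.isUnit_one_add)]

end Matrix

theorem rkSub_transpose {V W F : Type*} [Fintype V] [Fintype W] [Field F] (M : Matrix V W F)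
    (X : Finset V) (Y : Finset W) : rkSub Mᵀ Y X = rkSub M X Y := by
  rw [rkSub, rkSub, ← transpose_submatrix, rank_transpose]

def Matrix.localComp {V R : Type*} [DecidableEq V] [CommRing R] (M : Matrix V V R) (x : V)
    (l : R) : Matrix V V R :=
  Matrix.of fun z t => if z ≠ x ∧ t ≠ x then M z t + l * M z x * M x t else M z t

theorem Matrix.transpose_localComp {V R : Type*} [DecidableEq V] [CommRing R]
    (M : Matrix V V R) (x : V) (l : R) : (M.localComp x l)ᵀ = Mᵀ.localComp x l := by
  ext z t
  simp only [transpose_apply, localComp, of_apply, and_comm]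
  split_ifs <;> ring

section LocalComplementation

variable {F V : Type*} [Field F] [Fintype V] [DecidableEq V]

theorem rkSub_localComp_of_mem_of_notMem (M : Matrix V V F) (x : V) (l : F) {X Y : Finset V}
    (hX : x ∈ X) (hY : x ∉ Y) : rkSub (M.localComp x l) X Y = rkSub M X Y := by
  set N := M.submatrix ((↑) : X → V) ((↑) : Y → V)
  let c : X → F := fun i => if (i : V) = x then 0 else l * M i x
  have hN : (M.localComp x l).submatrix (↑) (↑) = N + vecMulVec c (N.row ⟨x, hX⟩) := by
    ext ⟨i, hi⟩ ⟨j, hj⟩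
    have hjx : j ≠ x := by rintro rfl; exact hY hj
    by_cases hix : i = x <;> simp [N, c, localComp, vecMulVec_apply, hix, hjx, mul_assoc]
  rw [rkSub, rkSub, hN, rank_add_vecMulVec_row N _ c (by simp [c])]

theorem rkSub_localComp_of_notMem_of_mem (M : Matrix V V F) (x : V) (l : F) {X Y : Finset V}
    (hX : x ∉ X) (hY : x ∈ Y) : rkSub (M.localComp x l) X Y = rkSub M X Y := by
  rw [← rkSub_transpose, transpose_localComp, rkSub_localComp_of_mem_of_notMem _ _ _ hY hX,
    rkSub_transpose]

end LocalComplementation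

theorem localComp_bicutrank_general {F V : Type*} [Field F] [Fintype V] [DecidableEq V]
    (M : Matrix V V F)
    (x : V) (l : F)
    (M' : Matrix V V F)
    (hM' : ∀ z t : V,
      M' z t = if z ≠ x ∧ t ≠ x then M z t + l * M z x * M x t else M z t) :
    ∀ X : Finset V,
      rkSub M' X Xᶜ + rkSub M' Xᶜ X = rkSub M X Xᶜ + rkSub M Xᶜ X := by
  obtain rfl : M' = M.localComp x l := Matrix.ext hM'
  intro X
  by_cases hX : x ∈ X
  · have hXc : x ∉ Xᶜ := Finset.notMem_compl.mpr hX
    rw [rkSub_localComp_of_mem_of_notMem M x l hX hXc,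
      rkSub_localComp_of_notMem_of_mem M x l hXc hX]
  · have hXc : x ∈ Xᶜ := Finset.mem_compl.mpr hX
    rw [rkSub_localComp_of_notMem_of_mem M x l hX hXc,
      rkSub_localComp_of_mem_of_notMem M x l hXc hX]

/-- λ-local complementation preserves the bi-cut-rank function. -/
theorem localComp_bicutrank {F V : Type*} [Field F] [Fintype V] [DecidableEq V]
    (M : Matrix V V F)
    (x : V) (l : F) (hl : l ≠ 0)
    (M' : Matrix V V F)
    (hM' : ∀ z t : V,
      M' z t = if z ≠ x ∧ t ≠ x then M z t + l * M z x * M x t else M z t) :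
    ∀ X : Finset V,
      rkSub M' X Xᶜ + rkSub M' Xᶜ X = rkSub M X Xᶜ + rkSub M Xᶜ X :=
  localComp_bicutrank_general M x l M' hM'
end

section
/- Let F be a field, G an F*-graph on V with adjacency matrix M over F. Define the matroid M_G on ground set V ⊔ V' (V' a disjoint copy of V) represented by the (V, V ∪ V')-matrix [I | M]. Then for every X ⊆ V, with P_X := {x, x' : x ∈ X}, the matroid connectivity λ(P_X) := r(X ∪ X') + r((V\X) ∪ (V\X)') − r(V ∪ V') + 1 equals rk(M[X, V\X]) + rk(M[V\X, X]) + 1. -/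
/-- Rank of the set `S` of columns of the matrix `[I | M]` representing the matroid `M_G`. -/
noncomputable def mtrRank {V F : Type*} [Fintype V] [DecidableEq V] [Field F]
    (M : Matrix V V F) (S : Finset (V ⊕ V)) : ℕ :=
  ((Matrix.fromCols (1 : Matrix V V F) M).submatrix id
      (fun j : S => (j : V ⊕ V))).rank

/-!
Order the rows of `[I | M]` as `X, V \ X` and a column set `X ⊔ Y'` as `X, Y'`. The chosen
columns then form the block matrix `[[I, M[X, Y]], [0, M[V \ X, Y]]]`, which is
`diag(I, M[V \ X, Y])` times an invertible matrix, so `r(X ∪ Y') = |X| + rk M[V \ X, Y]`.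
With `Y = X`, with `X` replaced by `V \ X`, and with `X = Y = V`, the cardinalities
`|X| + |V \ X| - |V|` cancel in the connectivity function.
-/

open Matrix Module

theorem Submodule.finrank_prod {K M N : Type*} [DivisionRing K] [AddCommGroup M]
    [AddCommGroup N] [Module K M] [Module K N] (p : Submodule K M) (q : Submodule K N)
    [FiniteDimensional K p] [FiniteDimensional K q] :
    finrank K (p.prod q) = finrank K p + finrank K q := by
  have h := LinearMap.finrank_range_of_inj (f := p.subtype.prodMap q.subtype)
    (Prod.map_injective.2 ⟨p.injective_subtype, q.injective_subtype⟩)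
  rwa [LinearMap.range_prodMap, p.range_subtype, q.range_subtype, Module.finrank_prod] at h

section BlockRank

variable {F m₁ m₂ n₁ n₂ : Type*} [Field F] [Fintype n₁] [Fintype n₂]

theorem Matrix.mulVecLin_fromBlocks_zero_zero (A : Matrix m₁ n₁ F) (D : Matrix m₂ n₂ F) :
    (fromBlocks A 0 0 D).mulVecLin =
      (LinearEquiv.sumArrowLequivProdArrow m₁ m₂ F F).symm.toLinearMap ∘ₗ
        A.mulVecLin.prodMap D.mulVecLin ∘ₗ
        (LinearEquiv.sumArrowLequivProdArrow n₁ n₂ F F).toLinearMap := by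
  ext x (i | i) <;>
    simp [fromBlocks_mulVec, LinearEquiv.sumArrowLequivProdArrow, Equiv.sumArrowEquivProdArrow]

theorem Matrix.rank_fromBlocks_zero_zero (A : Matrix m₁ n₁ F) (D : Matrix m₂ n₂ F) :
    (fromBlocks A 0 0 D).rank = A.rank + D.rank := by
  rw [rank, mulVecLin_fromBlocks_zero_zero, LinearMap.range_comp,
    LinearMap.range_comp_of_range_eq_top _ (LinearEquiv.range _), LinearEquiv.finrank_map_eq,
    LinearMap.range_prodMap, Submodule.finrank_prod, rank, rank]

theorem Matrix.rank_fromBlocks_one_zero [DecidableEq n₁] [DecidableEq n₂]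
    (B : Matrix n₁ n₂ F) (D : Matrix m₂ n₂ F) :
    (fromBlocks (1 : Matrix n₁ n₁ F) B 0 D).rank = Fintype.card n₁ + D.rank := by
  have hfactor : fromBlocks (1 : Matrix n₁ n₁ F) B 0 D =
      fromBlocks (1 : Matrix n₁ n₁ F) 0 0 D * fromBlocks 1 B 0 (1 : Matrix n₂ n₂ F) := by
    simp [fromBlocks_multiply]
  have hunit : IsUnit (fromBlocks 1 B 0 (1 : Matrix n₂ n₂ F)).det := by simp
  rw [hfactor, rank_mul_eq_left_of_isUnit_det _ _ hunit, rank_fromBlocks_zero_zero, rank_one]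

end BlockRank

namespace Finset

def sumComplEquiv {α : Type*} [Fintype α] [DecidableEq α] (X : Finset α) : X ⊕ ↥Xᶜ ≃ α :=
  (Equiv.sumCongr (Equiv.refl X) (Equiv.subtypeEquivRight fun _ => mem_compl)).trans
    (Equiv.sumCompl (· ∈ X))

@[simp]
theorem sumComplEquiv_inl {α : Type*} [Fintype α] [DecidableEq α] (X : Finset α) (a : X) :
    X.sumComplEquiv (.inl a) = a :=
  rfl

@[simp]
theorem sumComplEquiv_inr {α : Type*} [Fintype α] [DecidableEq α] (X : Finset α) (a : ↥Xᶜ) :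
    X.sumComplEquiv (.inr a) = a :=
  rfl

def disjSumEquiv {α β : Type*} (X : Finset α) (Y : Finset β) : X ⊕ Y ≃ X.disjSum Y :=
  (Equiv.sumCongr (Equiv.subtypeEquivRight fun _ => inl_mem_disjSum.symm)
    (Equiv.subtypeEquivRight fun _ => inr_mem_disjSum.symm)).trans
    (Equiv.subtypeSum (p := (· ∈ X.disjSum Y))).symm

@[simp]
theorem coe_disjSumEquiv_inl {α β : Type*} (X : Finset α) (Y : Finset β) (a : X) :
    (X.disjSumEquiv Y (.inl a) : α ⊕ β) = .inl a :=
  rfl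

@[simp]
theorem coe_disjSumEquiv_inr {α β : Type*} (X : Finset α) (Y : Finset β) (b : Y) :
    (X.disjSumEquiv Y (.inr b) : α ⊕ β) = .inr b :=
  rfl

end Finset

theorem rkSub_empty_left {F V W : Type*} [Field F] [Fintype V] [Fintype W]
    (M : Matrix V W F) (Y : Finset W) : rkSub M ∅ Y = 0 := by
  simpa [rkSub] using
    rank_le_card_height (M.submatrix ((↑) : (∅ : Finset V) → V) ((↑) : Y → W))

section MatroidRank

variable {F V : Type*} [Field F] [Fintype V] [DecidableEq V] (M : Matrix V V F)

theorem mtrRank_disjSum (X Y : Finset V) :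
    mtrRank M (X.disjSum Y) = X.card + rkSub M Xᶜ Y := by
  have hblocks : ((fromCols (1 : Matrix V V F) M).submatrix id
      (fun j : X.disjSum Y => (j : V ⊕ V))).submatrix X.sumComplEquiv (X.disjSumEquiv Y) =
      fromBlocks 1 (M.submatrix (↑) (↑)) 0 (M.submatrix (↑) (↑)) := by
    ext (i | i) (j | j)
    · simp [one_apply]
    · simp
    · simp [one_apply_ne' (ne_of_mem_of_not_mem j.2 (Finset.mem_compl.1 i.2))]
    · simp
  rw [mtrRank, ← rank_submatrix _ X.sumComplEquiv (X.disjSumEquiv Y), hblocks,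
    rank_fromBlocks_one_zero, Fintype.card_coe, rkSub]

theorem mtrRank_univ : mtrRank M Finset.univ = Fintype.card V := by
  rw [← Finset.univ_disjSum_univ, mtrRank_disjSum, Finset.compl_univ, rkSub_empty_left,
    Finset.card_univ, add_zero]

end MatroidRank

theorem matroid_connectivity_eq_bicutrank_general {F V : Type*} [Field F] [Fintype V] [DecidableEq V]
    (M : Matrix V V F) :
    ∀ X : Finset V,
      (mtrRank M (X.disjSum X) : ℤ) + mtrRank M (Xᶜ.disjSum Xᶜ)
          - mtrRank M (Finset.univ : Finset (V ⊕ V)) + 1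
        = rkSub M X Xᶜ + rkSub M Xᶜ X + 1 := by
  intro X
  rw [mtrRank_disjSum, mtrRank_disjSum, compl_compl, mtrRank_univ,
    ← Finset.card_add_card_compl X]
  push_cast
  ring

/-- The connectivity function of the partitioned matroid `(M_G, Π(G))` evaluated at
`P = {P_x : x ∈ X}` equals `rk M[X, V\X] + rk M[V\X, X] + 1`. -/
theorem matroid_connectivity_eq_bicutrank {F V : Type*} [Field F] [Fintype V] [DecidableEq V]
    (M : Matrix V V F) (hdiag : ∀ z : V, M z z = 0) :
    ∀ X : Finset V,
      (mtrRank M (X.disjSum X) : ℤ) + mtrRank M (Xᶜ.disjSum Xᶜ)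
          - mtrRank M (Finset.univ : Finset (V ⊕ V)) + 1
        = rkSub M X Xᶜ + rkSub M Xᶜ X + 1 :=
  matroid_connectivity_eq_bicutrank_general M
end
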